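/- For every b ≥ 1, the partition (b, b) of 2b satisfies |η_{(b,b)}| ≤ D_{b+1} + (b−1)·D_b. Moreover, for every b ≥ 4, |η_{(b,b)}| ≤ D_{b+1} + (b−3)·D_b, with equality if and only if b = 4. -/

import Mathlib

/-- Derangement numbers: `D 0 = 1`, `D (m+1) = (m+1) * D m + (-1)^(m+1)`. -/
def derange : ℕ → ℤ
  | 0 => 1
  | n + 1 => (n + 1 : ℤ) * derange n + (-1) ^ (n + 1)

/-- Subtract one from every part and discard the parts that become zero
(deleting the first column of the Ferrers diagram). -/
def strip (l : List ℕ) : List ℕ := (l.map (· - 1)).filter (fun x => 0 < x)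

lemma strip_measure (l : List ℕ) : (strip l).sum + (strip l).length ≤ l.sum := by
  induction l with
  | nil => simp [strip]
  | cons x t ih =>
      simp only [strip, List.map_cons, List.filter_cons] at ih ⊢
      by_cases hx : 0 < x - 1 <;> simp [hx] <;> omega

/-- The eigenvalues of the derangement graph, defined by Renteln's recurrence:
`η ∅ = 1` and `η λ = (-1)^h (η (λ-ĥ) + (-1)^{λ₁} h η (λ-ĉ))`, where
`h = λ₁ + r - 1` is the hook size, `λ-ĥ = strip (tail λ)` removes the hook,
and `λ-ĉ = strip λ` removes the first column. -/
def eta : List ℕ → ℤ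
  | [] => 1
  | a :: t =>
      (-1) ^ (a + t.length) *
        (eta (strip t) + (-1) ^ a * ((a : ℤ) + t.length) * eta (strip (a :: t)))
  termination_by l => l.sum + l.length
  decreasing_by
  · have h1 := strip_measure t
    simp only [List.sum_cons, List.length_cons]
    omega
  · have h1 := strip_measure (a :: t)
    simp only [List.sum_cons, List.length_cons] at h1 ⊢
    omega

/-- `l` is (the list of parts of) a partition of `n`: weakly decreasing,
all parts positive, summing to `n`. -/
def IsPartition (n : ℕ) (l : List ℕ) : Prop :=
  l.Pairwise (· ≥ ·) ∧ (∀ x ∈ l, 0 < x) ∧ l.sum = n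

/-- The hook partition `(a, 1^(n-a))` of `n`. -/
def hookP (n a : ℕ) : List ℕ := a :: List.replicate (n - a) 1

/-!
Expanding Renteln's recurrence once gives
`η_{(b,b)} = (-1)^(b+1) D_{b-1} - (b+1) η_{(b-1,b-1)}`, so `g_b = (-1)^b η_{(b,b)}` satisfies
`g_b = (b+1) g_{b-1} - D_{b-1}`; by induction `g_b > D_b ≥ 0`, hence `|η_{(b,b)}| = g_b`.
The gap `e_b = D_{b+1} + (b-3) D_b - g_b` obeys `e_{b+1} = (b+2) e_b + 5 D_b - (b-3)(-1)^b`,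
whose inhomogeneous term is positive for `b ≥ 4`; since `e_4 = 0`, the gap vanishes at `b = 4`
and is positive afterwards.
-/

-- The seed `etaPairAbs 0 = 1` only serves to give `etaPairAbs 1 = 1`; it is not `|eta [0, 0]| = 2`.
def etaPairAbs : ℕ → ℤ
  | 0 => 1
  | n + 1 => ((n : ℤ) + 2) * etaPairAbs n - derange n

lemma derange_eq_numDerangements (n : ℕ) : derange n = numDerangements n := by
  induction n with
  | zero => rfl
  | succ n ih =>
    rw [derange, ih, numDerangements_succ, pow_succ]
    ring

lemma derange_nonneg (n : ℕ) : 0 ≤ derange n := by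
  rw [derange_eq_numDerangements]
  positivity

lemma succ_le_numDerangements_add_two : ∀ n : ℕ, n + 1 ≤ numDerangements (n + 2)
  | 0 => le_rfl
  | n + 1 => by
    have := succ_le_numDerangements_add_two n
    rw [numDerangements_add_two]
    nlinarith

lemma succ_le_derange_add_two (n : ℕ) : (n : ℤ) + 1 ≤ derange (n + 2) := by
  rw [derange_eq_numDerangements]
  exact_mod_cast succ_le_numDerangements_add_two n

lemma neg_one_pow_mul_self {R : Type*} [Monoid R] [HasDistribNeg R] (k : ℕ) :
    (-1 : R) ^ k * (-1) ^ k = 1 := by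
  rw [← pow_add, ← two_mul, pow_mul, neg_one_sq, one_pow]

lemma strip_singleton (m : ℕ) : strip [m + 2] = [m + 1] := by
  simp [strip]

lemma strip_pair (m : ℕ) : strip [m + 2, m + 2] = [m + 1, m + 1] := by
  simp [strip]

lemma eta_singleton (m : ℕ) : eta [m] = derange m := by
  induction m with
  | zero => simp [eta, strip, derange]
  | succ m ih =>
    have h_strip : eta (strip [m + 1]) = derange m := by
      cases m with
      | zero => simp [eta, strip, derange]
      | succ m => rw [strip_singleton, ih]
    rw [eta, h_strip, derange, strip, List.map_nil, List.filter_nil, eta]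
    simp only [List.length_nil]
    push_cast
    linear_combination ((m : ℤ) + 1) * derange m * neg_one_pow_mul_self (R := ℤ) (m + 1)

lemma eta_pair (n : ℕ) : eta [n + 1, n + 1] = (-1) ^ (n + 1) * etaPairAbs (n + 1) := by
  induction n with
  | zero => simp [eta, strip, etaPairAbs, derange]
  | succ n ih =>
    rw [eta, strip_pair, strip_singleton, eta_singleton, ih, etaPairAbs.eq_2 (n + 1)]
    simp only [List.length_cons, List.length_nil]
    push_cast
    linear_combination
      (-1) ^ n * ((n : ℤ) + 3) * etaPairAbs (n + 1) * neg_one_pow_mul_self (R := ℤ) n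

lemma derange_lt_etaPairAbs (n : ℕ) : derange (n + 1) < etaPairAbs (n + 1) := by
  induction n with
  | zero => decide
  | succ n ih =>
    have h_sign : (-1 : ℤ) ^ (n + 2) ≤ 1 := (le_abs_self _).trans (abs_neg_one_pow _).le
    rw [etaPairAbs.eq_2 (n + 1), derange.eq_2 (n + 1)]
    push_cast
    nlinarith

lemma abs_eta_pair (n : ℕ) : |eta [n + 1, n + 1]| = etaPairAbs (n + 1) := by
  rw [eta_pair, abs_mul, abs_neg_one_pow, one_mul, abs_of_pos]
  exact (derange_nonneg _).trans_lt (derange_lt_etaPairAbs n)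

def etaPairGap (b : ℕ) : ℤ := derange (b + 1) + ((b : ℤ) - 3) * derange b - etaPairAbs b

lemma etaPairGap_succ (b : ℕ) :
    etaPairGap (b + 1) =
      ((b : ℤ) + 2) * etaPairGap b + 5 * derange b - ((b : ℤ) - 3) * (-1) ^ b := by
  rw [etaPairGap, etaPairGap, derange.eq_2 (b + 1), derange.eq_2 b, etaPairAbs.eq_2]
  push_cast
  ring

lemma etaPairGap_four : etaPairGap 4 = 0 := by decide

lemma etaPairGap_succ_pos {b : ℕ} (hb : 4 ≤ b) (h : 0 ≤ etaPairGap b) :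
    0 < etaPairGap (b + 1) := by
  obtain ⟨c, rfl⟩ : ∃ c, b = c + 2 := ⟨b - 2, by omega⟩
  have h_derange := succ_le_derange_add_two c
  have h_sign : (-1 : ℤ) ^ (c + 2) ≤ 1 := (le_abs_self _).trans (abs_neg_one_pow _).le
  have h_c : (2 : ℤ) ≤ c := by exact_mod_cast (by omega : 2 ≤ c)
  rw [etaPairGap_succ]
  push_cast
  nlinarith

lemma etaPairGap_pos {b : ℕ} (hb : 5 ≤ b) : 0 < etaPairGap b := by
  induction b, hb using Nat.le_induction with
  | base => exact etaPairGap_succ_pos le_rfl etaPairGap_four.ge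
  | succ b hb ih => exact etaPairGap_succ_pos (by omega) ih.le

lemma etaPairGap_nonneg {b : ℕ} (hb : 4 ≤ b) : 0 ≤ etaPairGap b := by
  rcases hb.eq_or_lt with rfl | hb
  · exact etaPairGap_four.ge
  · exact (etaPairGap_pos hb).le

/-- For `b ≥ 1`, `|η_{(b,b)}| ≤ D_{b+1} + (b-1) D_b`; for `b ≥ 4`,
`|η_{(b,b)}| ≤ D_{b+1} + (b-3) D_b` with equality iff `b = 4`. -/
theorem eta_abs_bb_upper (b : ℕ) (hb : 1 ≤ b) :
    |eta [b, b]| ≤ derange (b + 1) + ((b : ℤ) - 1) * derange b ∧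
    (4 ≤ b →
      |eta [b, b]| ≤ derange (b + 1) + ((b : ℤ) - 3) * derange b ∧
      (|eta [b, b]| = derange (b + 1) + ((b : ℤ) - 3) * derange b ↔ b = 4)) := by
  obtain ⟨n, rfl⟩ : ∃ n, b = n + 1 := ⟨b - 1, by omega⟩
  rw [abs_eta_pair]
  have h_gap : etaPairAbs (n + 1) =
      derange (n + 1 + 1) + (((n + 1 : ℕ) : ℤ) - 3) * derange (n + 1) - etaPairGap (n + 1) := by
    rw [etaPairGap]; ring
  refine ⟨?_, fun hb4 => ⟨?_, ?_⟩⟩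
  · rcases Nat.lt_or_ge n 3 with hn | hn
    · interval_cases n <;> decide
    · have := etaPairGap_nonneg (b := n + 1) (by omega)
      have := derange_nonneg (n + 1)
      rw [h_gap]
      linarith
  · rw [h_gap]
    linarith [etaPairGap_nonneg hb4]
  · rw [h_gap, sub_eq_self]
    constructor
    · intro h_zero
      by_contra h_ne
      exact (etaPairGap_pos (by omega)).ne' h_zero
    · intro h4
      rw [h4]
      exact etaPairGap_four
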